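/- Let X be a real Banach space with a Schauder basis (e_i)_{i ∈ ℕ} that is 1-unconditional, i.e., ‖Σ_i a_i b_i e_i‖ ≤ (sup_i |b_i|) ‖Σ_i a_i e_i‖ for all finite scalar sequences (a_i) and (b_i). For n ∈ ℕ let Σ_n denote the set of all x ∈ X that are linear combinations of at most n of the basis vectors e_i. Then every closed infinite dimensional linear subspace Y of X is 1-far from the approximation scheme (Σ_n): E(S(Y), Σ_n) ≥ 1 for every n; equivalently, for every n and every c > 1 there exists y ∈ Y with ‖y‖ < c such that ‖y − s‖ > 1/c for every s ∈ Σ_n. -/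

import Mathlib

/-!
Choose unit vectors `y j ∈ Y` that are small perturbations of blocks `x j` of the basis with
pairwise disjoint supports; this is possible because `Y` meets the kernel of any finitely many
coefficient functionals. By `1`-unconditionality, restricting a finitely supported vector to a
set of coordinates does not increase its norm, so if `w` is supported on `n` coordinates then
`‖∑ j ∈ F, x j - w‖` is at least the norm of the sum over those `j ∈ F` whose block misses the
support of `w`, i.e. over all but at most `n` indices of `F`. Since `‖∑ j ∈ F, x j‖` grows at most
linearly in `#F`, deleting `n` blocks cannot always cost a fixed fraction of the norm, so some `F`
loses at most a factor `θ < 1` under every such deletion, and `∑ j ∈ F, y j` is then almost as far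
from `Σₙ` as its norm.
-/

open Filter Finset Function Topology

section

variable {X : Type*} [NormedAddCommGroup X] [NormedSpace ℝ X]

/-- Unlike Mathlib's `SchauderBasis`, the coefficient functionals are not required to be
continuous. -/
def IsSchauderBasis (e : ℕ → X) : Prop :=
  ∀ x : X, ∃! a : ℕ → ℝ, Tendsto (fun N => ∑ i ∈ range N, a i • e i) atTop (𝓝 x)

def IsOneUnconditional (e : ℕ → X) : Prop :=
  ∀ (a b : ℕ → ℝ) (s : Finset ℕ), (∀ i ∈ s, |b i| ≤ 1) →
    ‖∑ i ∈ s, (a i * b i) • e i‖ ≤ ‖∑ i ∈ s, a i • e i‖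

/-- The paper's `Σₙ`. -/
def sparseSpan (e : ℕ → X) (n : ℕ) : Set X :=
  {x | ∃ s : Finset ℕ, s.card ≤ n ∧ x ∈ Submodule.span ℝ (e '' ↑s)}

variable {e : ℕ → X}

lemma smul_mem_sparseSpan {n : ℕ} {x : X} (t : ℝ) (hx : x ∈ sparseSpan e n) :
    t • x ∈ sparseSpan e n :=
  let ⟨s, hs, hxs⟩ := hx
  ⟨s, hs, Submodule.smul_mem _ t hxs⟩

lemma exists_forall_mem_eq_of_pairwise_disjoint {ι α β : Type*} [Nonempty β]
    {blk : ι → Finset α} (hblk : Pairwise (Disjoint on blk)) (c : ι → α → β) :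
    ∃ C : α → β, ∀ j, ∀ i ∈ blk j, C i = c j i := by
  classical
  refine ⟨fun i => if h : ∃ j, i ∈ blk j then c h.choose i else Classical.arbitrary β,
    fun j i hi => ?_⟩
  have h : ∃ j, i ∈ blk j := ⟨j, hi⟩
  dsimp only
  rw [dif_pos h, hblk.eq (not_disjoint_iff.2 ⟨i, h.choose_spec, hi⟩)]

lemma card_filter_not_disjoint_le {ι α : Type*} [DecidableEq α] {blk : ι → Finset α}
    (hblk : Pairwise (Disjoint on blk)) (F : Finset ι) (A : Finset α) :
    #(F.filter fun j => ¬Disjoint (blk j) A) ≤ #A :=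
  calc #(F.filter fun j => ¬Disjoint (blk j) A)
      ≤ #((F.filter fun j => ¬Disjoint (blk j) A).biUnion fun j => blk j ∩ A) :=
        card_le_card_biUnion
          (fun _ _ _ _ hij => (hblk hij).mono inter_subset_left inter_subset_left)
          fun _ hj => not_disjoint_iff_nonempty_inter.1 (mem_filter.1 hj).2
    _ ≤ #A := card_le_card (biUnion_subset.2 fun _ _ => inter_subset_right)

lemma exists_nonempty_forall_mul_le_of_card_sdiff_le {ι : Type*} [DecidableEq ι] [Infinite ι]
    (s : Finset ι → ℝ) {a b θ : ℝ} (ha : 0 < a) (hlow : ∀ G : Finset ι, G.Nonempty → a ≤ s G)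
    (hup : ∀ F : Finset ι, s F ≤ b * #F) (hθ₀ : 0 ≤ θ) (hθ₁ : θ < 1) (n : ℕ) :
    ∃ F : Finset ι, F.Nonempty ∧ ∀ G ⊆ F, #(F \ G) ≤ n → θ * s F ≤ s G := by
  -- Otherwise, deleting `n` elements `k` times from a set of size `k * n + 1` gives
  -- `a ≤ θ ^ k * b * (k * n + 1)`, whose right-hand side tends to `0`.
  by_contra! h
  have hiter : ∀ k : ℕ, ∀ F : Finset ι, k * n < #F → a ≤ θ ^ k * s F := by
    intro k
    induction k with
    | zero => intro F hF; simpa using hlow F (card_pos.1 (by omega))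
    | succ k ih =>
      intro F hF
      obtain ⟨G, hGF, hcard, hG⟩ := h F (card_pos.1 (by nlinarith))
      have hkG : k * n < #G := by
        have := card_sdiff_add_card_eq_card hGF
        nlinarith
      calc a ≤ θ ^ k * s G := ih G hkG
        _ ≤ θ ^ k * (θ * s F) := by gcongr
        _ = θ ^ (k + 1) * s F := by ring
  have hlim : Tendsto (fun k : ℕ => b * n * (k * θ ^ k) + b * θ ^ k) atTop (𝓝 0) := by
    simpa using ((tendsto_self_mul_const_pow_of_lt_one hθ₀ hθ₁).const_mul (b * n)).add
      ((tendsto_pow_atTop_nhds_zero_of_lt_one hθ₀ hθ₁).const_mul b)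
  obtain ⟨k, hk⟩ := (hlim.eventually (gt_mem_nhds ha)).exists
  obtain ⟨F, hF⟩ := Infinite.exists_subset_card_eq ι (k * n + 1)
  have hak := hiter k F (by omega)
  have hbF := hup F
  rw [hF] at hbF
  push_cast at hbF
  nlinarith [pow_nonneg hθ₀ k]

section Unconditional

lemma IsOneUnconditional.norm_sum_smul_le_of_subset (hunc : IsOneUnconditional e) (a : ℕ → ℝ)
    {G F : Finset ℕ} (hGF : G ⊆ F) : ‖∑ i ∈ G, a i • e i‖ ≤ ‖∑ i ∈ F, a i • e i‖ := by
  classical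
  have h := hunc a (fun i => if i ∈ G then 1 else 0) F fun i _ => by split_ifs <;> simp
  simpa [mul_ite, ite_smul, sum_ite_mem, inter_eq_right.2 hGF] using h

lemma IsOneUnconditional.norm_sum_smul_le_norm_sub (hunc : IsOneUnconditional e) (a : ℕ → ℝ)
    {U V A : Finset ℕ} (hVU : V ⊆ U) (hVA : Disjoint V A) {w : X}
    (hw : w ∈ Submodule.span ℝ (e '' A)) :
    ‖∑ i ∈ V, a i • e i‖ ≤ ‖∑ i ∈ U, a i • e i - w‖ := by
  classical
  obtain ⟨l, rfl⟩ := (Submodule.mem_span_image_finset_iff_exists_fun' ℝ).1 hw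
  set d : ℕ → ℝ := fun i => (if i ∈ U then a i else 0) - if i ∈ A then l i else 0
  have hU : ∑ i ∈ U, a i • e i - ∑ i ∈ A, l i • e i = ∑ i ∈ U ∪ A, d i • e i := by
    simp only [d, sub_smul, sum_sub_distrib, ite_smul, zero_smul, sum_ite_mem,
      union_inter_cancel_left, union_inter_cancel_right]
  have hV : ∑ i ∈ V, a i • e i = ∑ i ∈ V, d i • e i :=
    sum_congr rfl fun i hi => by simp [d, hVU hi, disjoint_left.1 hVA hi]
  rw [hU, hV]
  exact hunc.norm_sum_smul_le_of_subset d (hVU.trans subset_union_left)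

lemma IsOneUnconditional.exists_sum_blocks_far_from_sparseSpan (hunc : IsOneUnconditional e)
    {C : ℕ → ℝ} {blk : ℕ → Finset ℕ} (hblk : Pairwise (Disjoint on blk)) {a b θ : ℝ} (ha : 0 < a)
    (hlow : ∀ j, a ≤ ‖∑ i ∈ blk j, C i • e i‖) (hup : ∀ j, ‖∑ i ∈ blk j, C i • e i‖ ≤ b)
    (hθ₀ : 0 ≤ θ) (hθ₁ : θ < 1) (n : ℕ) :
    ∃ F : Finset ℕ, a ≤ ‖∑ i ∈ F.biUnion blk, C i • e i‖ ∧ ∀ w ∈ sparseSpan e n,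
      θ * ‖∑ i ∈ F.biUnion blk, C i • e i‖ ≤ ‖∑ i ∈ F.biUnion blk, C i • e i - w‖ := by
  set s : Finset ℕ → ℝ := fun F => ‖∑ i ∈ F.biUnion blk, C i • e i‖
  have hs_low : ∀ G : Finset ℕ, G.Nonempty → a ≤ s G := fun G ⟨j, hj⟩ =>
    calc a ≤ s {j} := by simpa [s] using hlow j
      _ ≤ s G := hunc.norm_sum_smul_le_of_subset C
        (biUnion_subset_biUnion_of_subset_left _ (singleton_subset_iff.2 hj))
  have hs_up : ∀ F : Finset ℕ, s F ≤ b * #F := fun F =>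
    calc s F ≤ ∑ j ∈ F, ‖∑ i ∈ blk j, C i • e i‖ := by
          simpa only [s, sum_biUnion (hblk.set_pairwise _)] using norm_sum_le _ _
      _ ≤ b * #F := by simpa [mul_comm] using sum_le_sum fun j (_ : j ∈ F) => hup j
  obtain ⟨F, hF, hFfar⟩ :=
    exists_nonempty_forall_mul_le_of_card_sdiff_le s ha hs_low hs_up hθ₀ hθ₁ n
  refine ⟨F, hs_low F hF, fun w ⟨A, hA, hwA⟩ => ?_⟩
  classical
  set G := F.filter fun j => Disjoint (blk j) A
  have hcard : #(F \ G) ≤ n := by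
    rw [← filter_not]
    exact (card_filter_not_disjoint_le hblk F A).trans hA
  calc θ * s F ≤ s G := hFfar G (filter_subset _ _) hcard
    _ ≤ _ := hunc.norm_sum_smul_le_norm_sub C
      (biUnion_subset_biUnion_of_subset_left _ (filter_subset _ _))
      ((disjoint_biUnion_left _ _ _).2 fun j hj => (mem_filter.1 hj).2) hwA

end Unconditional

section Coefficients

variable (hbasis : IsSchauderBasis e)

noncomputable def IsSchauderBasis.coeffs : X →ₗ[ℝ] ℕ → ℝ where
  toFun x := (hbasis x).choose
  map_add' u v := (hbasis (u + v)).unique (hbasis (u + v)).choose_spec.1 <| by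
    simpa only [Pi.add_apply, add_smul, sum_add_distrib] using
      (hbasis u).choose_spec.1.add (hbasis v).choose_spec.1
  map_smul' t u := (hbasis (t • u)).unique (hbasis (t • u)).choose_spec.1 <| by
    simpa only [Pi.smul_apply, smul_eq_mul, mul_smul, ← smul_sum, RingHom.id_apply] using
      (hbasis u).choose_spec.1.const_smul t

lemma IsSchauderBasis.tendsto_sum_coeffs (x : X) :
    Tendsto (fun N => ∑ i ∈ range N, hbasis.coeffs x i • e i) atTop (𝓝 x) :=
  (hbasis x).choose_spec.1

lemma IsSchauderBasis.exists_mem_norm_eq_one_coeffs_eq_zero {Y : Submodule ℝ X}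
    (hY : ¬FiniteDimensional ℝ Y) (N : ℕ) :
    ∃ y ∈ Y, ‖y‖ = 1 ∧ ∀ i < N, hbasis.coeffs y i = 0 := by
  set φ : Y →ₗ[ℝ] Fin N → ℝ := LinearMap.funLeft ℝ ℝ Fin.val ∘ₗ hbasis.coeffs ∘ₗ Y.subtype
  have hker : LinearMap.ker φ ≠ ⊥ := fun h =>
    hY (FiniteDimensional.of_injective φ (LinearMap.ker_eq_bot.1 h))
  obtain ⟨v, hv, hv0⟩ := (Submodule.ne_bot_iff _).1 hker
  have hv0' : (v : X) ≠ 0 := by simpa using hv0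
  refine ⟨‖(v : X)‖⁻¹ • (v : X), Y.smul_mem _ v.2, norm_smul_inv_norm hv0', fun i hi => ?_⟩
  have := congrFun (LinearMap.mem_ker.1 hv) ⟨i, hi⟩
  simp_all [φ]

lemma IsSchauderBasis.exists_mem_norm_eq_one_near_sum_Ico {Y : Submodule ℝ X}
    (hY : ¬FiniteDimensional ℝ Y) (N : ℕ) {ε : ℝ} (hε : 0 < ε) :
    ∃ y ∈ Y, ‖y‖ = 1 ∧ ∃ M, N ≤ M ∧ ‖y - ∑ i ∈ Ico N M, hbasis.coeffs y i • e i‖ < ε := by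
  obtain ⟨y, hyY, hy1, hy0⟩ := hbasis.exists_mem_norm_eq_one_coeffs_eq_zero hY N
  obtain ⟨K, hK⟩ := Metric.tendsto_atTop.1 (hbasis.tendsto_sum_coeffs y) ε hε
  refine ⟨y, hyY, hy1, max K N, le_max_right _ _, ?_⟩
  have hsum := sum_range_add_sum_Ico (fun i => hbasis.coeffs y i • e i) (le_max_right K N)
  rw [sum_eq_zero fun i hi => by rw [hy0 i (mem_range.1 hi), zero_smul], zero_add] at hsum
  rw [hsum, ← dist_eq_norm']
  exact hK _ (le_max_left _ _)

end Coefficients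

lemma IsSchauderBasis.exists_seq_near_disjoint_blocks (hbasis : IsSchauderBasis e)
    {Y : Submodule ℝ X} (hY : ¬FiniteDimensional ℝ Y) {ε : ℕ → ℝ} (hε : ∀ j, 0 < ε j) :
    ∃ (y : ℕ → X) (C : ℕ → ℝ) (blk : ℕ → Finset ℕ), Pairwise (Disjoint on blk) ∧
      ∀ j, y j ∈ Y ∧ ‖y j‖ = 1 ∧ ‖y j - ∑ i ∈ blk j, C i • e i‖ < ε j := by
  choose y hyY hy1 M hNM hyM using
    fun N j => hbasis.exists_mem_norm_eq_one_near_sum_Ico hY N (hε j)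
  let N : ℕ → ℕ := fun j => Nat.rec 0 (fun j Nj => M Nj j) j
  have hN : Monotone N := monotone_nat_of_le_succ fun j => hNM (N j) j
  have hblk : Pairwise (Disjoint on fun j => Ico (N j) (N (j + 1))) := fun j k hjk => by
    rw [onFun, ← disjoint_coe, coe_Ico, coe_Ico]
    exact hN.pairwise_disjoint_on_Ico_succ hjk
  obtain ⟨C, hC⟩ :=
    exists_forall_mem_eq_of_pairwise_disjoint hblk fun j i => hbasis.coeffs (y (N j) j) i
  refine ⟨fun j => y (N j) j, C, _, hblk, fun j => ⟨hyY _ _, hy1 _ _, ?_⟩⟩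
  rw [sum_congr rfl fun i hi => by rw [hC j i hi]]
  exact hyM (N j) j

lemma exists_ne_zero_forall_mul_norm_le_norm_sub (hbasis : IsSchauderBasis e)
    (hunc : IsOneUnconditional e) {Y : Submodule ℝ X} (hY : ¬FiniteDimensional ℝ Y) (n : ℕ)
    {θ : ℝ} (hθ₀ : 0 ≤ θ) (hθ₁ : θ < 1) :
    ∃ z ∈ Y, z ≠ 0 ∧ ∀ w ∈ sparseSpan e n, θ * ‖z‖ ≤ ‖z - w‖ := by
  -- `η` is small enough that `θ * (r + η) ≤ (1 + θ) / 2 * r - η` for all `r ≥ 1 / 2`.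
  obtain ⟨η, hη, hηθ⟩ : ∃ η : ℝ, 0 < η ∧ 8 * η = 1 - θ := ⟨(1 - θ) / 8, by linarith, by ring⟩
  obtain ⟨y, C, blk, hblk, hy⟩ :=
    hbasis.exists_seq_near_disjoint_blocks hY (ε := fun j => η / 2 / 2 ^ j) fun j => by positivity
  have hblock : ∀ j, |‖∑ i ∈ blk j, C i • e i‖ - 1| ≤ η / 2 := fun j => by
    rw [← (hy j).2.1, abs_sub_comm]
    refine (abs_norm_sub_norm_le _ _).trans ((hy j).2.2.le.trans ?_)
    exact div_le_self (by positivity) (one_le_pow₀ one_le_two)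
  obtain ⟨F, hF, hFfar⟩ := hunc.exists_sum_blocks_far_from_sparseSpan hblk (C := C) (a := 1 / 2)
    (b := 2) (θ := (1 + θ) / 2) (by norm_num)
    (fun j => by linarith [(abs_le.1 (hblock j)).1])
    (fun j => by linarith [(abs_le.1 (hblock j)).2]) (by linarith) (by linarith) n
  set x := ∑ i ∈ F.biUnion blk, C i • e i
  set z := ∑ j ∈ F, y j
  have hzx : ‖z - x‖ ≤ η := by
    rw [show x = ∑ j ∈ F, ∑ i ∈ blk j, C i • e i from sum_biUnion (hblk.set_pairwise _),
      ← sum_sub_distrib]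
    calc _ ≤ ∑ j ∈ F, η / 2 / 2 ^ j := norm_sum_le_of_le _ fun j _ => (hy j).2.2.le
      _ ≤ ∑' j, η / 2 / 2 ^ j :=
        (summable_geometric_two' η).sum_le_tsum _ fun j _ => by positivity
      _ = η := tsum_geometric_two' η
  have hz : ‖z‖ ≤ ‖x‖ + η := by linarith [norm_sub_norm_le z x]
  refine ⟨z, sum_mem fun j _ => (hy j).1, ?_, fun w hw => ?_⟩
  · rw [← norm_pos_iff]
    linarith [norm_sub_norm_le x z, norm_sub_rev x z]
  · calc θ * ‖z‖ ≤ θ * (‖x‖ + η) := by gcongr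
      _ ≤ (1 + θ) / 2 * ‖x‖ - η := by nlinarith [mul_le_mul_of_nonneg_left hF hη.le]
      _ ≤ ‖x - w‖ - ‖x - z‖ := by linarith [hFfar w hw, norm_sub_rev x z]
      _ ≤ ‖z - w‖ := by linarith [norm_sub_le_norm_sub_add_norm_sub x z w]

lemma exists_norm_eq_one_forall_le_norm_sub (hbasis : IsSchauderBasis e)
    (hunc : IsOneUnconditional e) {Y : Submodule ℝ X} (hY : ¬FiniteDimensional ℝ Y) (n : ℕ)
    {θ : ℝ} (hθ₀ : 0 ≤ θ) (hθ₁ : θ < 1) :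
    ∃ y ∈ Y, ‖y‖ = 1 ∧ ∀ w ∈ sparseSpan e n, θ ≤ ‖y - w‖ := by
  obtain ⟨z, hzY, hz0, hfar⟩ :=
    exists_ne_zero_forall_mul_norm_le_norm_sub hbasis hunc hY n hθ₀ hθ₁
  have hz : 0 < ‖z‖ := norm_pos_iff.2 hz0
  refine ⟨‖z‖⁻¹ • z, Y.smul_mem _ hzY, norm_smul_inv_norm hz0, fun w hw => ?_⟩
  calc θ = ‖z‖⁻¹ * (θ * ‖z‖) := by field_simp
    _ ≤ ‖z‖⁻¹ * ‖z - ‖z‖ • w‖ := by gcongr; exact hfar _ (smul_mem_sparseSpan _ hw)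
    _ = ‖‖z‖⁻¹ • z - w‖ := by
      rw [← Real.norm_of_nonneg (inv_nonneg.2 hz.le), ← norm_smul, smul_sub,
        inv_smul_smul₀ hz.ne', Real.norm_of_nonneg (inv_nonneg.2 hz.le)]

end

theorem unconditional_basis_one_far
    {X : Type*} [NormedAddCommGroup X] [NormedSpace ℝ X]
    (e : ℕ → X)
    (hbasis : ∀ x : X, ∃! a : ℕ → ℝ,
      Tendsto (fun N => ∑ i ∈ Finset.range N, a i • e i) atTop (nhds x))
    (hunc : ∀ (a b : ℕ → ℝ) (s : Finset ℕ), (∀ i ∈ s, |b i| ≤ 1) →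
      ‖∑ i ∈ s, (a i * b i) • e i‖ ≤ ‖∑ i ∈ s, a i • e i‖)
    (Y : Submodule ℝ X) (hY : ¬ FiniteDimensional ℝ Y)
    (n : ℕ) (c : ℝ) (hc : 1 < c) :
    ∃ y ∈ Y, ‖y‖ < c ∧
      ∀ x ∈ {x : X | ∃ s : Finset ℕ, s.card ≤ n ∧ x ∈ Submodule.span ℝ (e '' ↑s)},
        ‖y - x‖ > 1 / c := by
  obtain ⟨θ, hcθ, hθ⟩ := exists_between (show 1 / c < 1 from (div_lt_one (by linarith)).2 hc)
  obtain ⟨y, hyY, hy1, hfar⟩ := exists_norm_eq_one_forall_le_norm_sub (e := e) hbasis hunc hY n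
    ((one_div_pos.2 (by linarith)).le.trans hcθ.le) hθ
  exact ⟨y, hyY, hy1 ▸ hc, fun x hx => hcθ.trans_le (hfar x hx)⟩
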